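/- Let α ∈ (0, 2-√2), γ ∈ (0, (α²-4α+2)/2] be real, μ₁ := 2γ/(2-α)², ν₁ := (α²-10α+13)γ²/(3(1-α)²(2-α)²), K := (1-α)(3-α)/(2-α)². Then for all real c₁ ∈ [0,1] and complex c₂ with |c₂| ≤ 1 - c₁², the quantity c₁(1-c₁²) + (K - c₁/(1+c₁))|c₂|² + μ₁ c₁²|c₂| + |1/3 - ν₁| c₁⁴ is at most K. -/

import Mathlib

/-!
Since `K ≥ 1/2 ≥ c₁/(1+c₁)`, the left-hand side is increasing in `t = ‖c₂‖ ≥ 0`, so it suffices to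
take `t = 1 - c₁²`. There the defect is
`c₁²(1 - c₁²)(2K - 1 - μ₁) + c₁⁴(K - |1/3 - ν₁|)`, and both brackets are nonnegative:
`2K - 1 - μ₁ = (α² - 4α + 2 - 2γ)/(2 - α)²`, and `|1/3 - ν₁| ≤ K` follows from `0 ≤ ν₁ ≤ K + 1/3`,
which after `γ ≤ (α² - 4α + 2)/2` becomes a polynomial inequality in `α` with an explicit certificate.
-/

lemma add_mul_sq_le_of_le_two_mul_sub_one {K μ L c t : ℝ} (hμ : 0 ≤ μ) (hμK : μ ≤ 2 * K - 1)
    (hLK : L ≤ K) (hc0 : 0 ≤ c) (hc1 : c ≤ 1) (ht0 : 0 ≤ t) (ht : t ≤ 1 - c ^ 2) :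
    c * (1 - c ^ 2) + (K - c / (1 + c)) * t ^ 2 + μ * c ^ 2 * t + L * c ^ 4 ≤ K := by
  have hc : c / (1 + c) ≤ 1 / 2 := by rw [div_le_iff₀ (by linarith)]; linarith
  have hA : 0 ≤ K - c / (1 + c) := by linarith
  have hu : 0 ≤ 1 - c ^ 2 := by nlinarith
  calc c * (1 - c ^ 2) + (K - c / (1 + c)) * t ^ 2 + μ * c ^ 2 * t + L * c ^ 4
      ≤ c * (1 - c ^ 2) + (K - c / (1 + c)) * (1 - c ^ 2) ^ 2 + μ * c ^ 2 * (1 - c ^ 2)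
          + L * c ^ 4 := by gcongr
    _ = K - c ^ 2 * (1 - c ^ 2) * (2 * K - 1 - μ) - c ^ 4 * (K - L) := by
      field_simp
      ring
    _ ≤ K := by
      have := mul_nonneg (mul_nonneg (sq_nonneg c) hu) (sub_nonneg.mpr hμK)
      have := mul_nonneg (pow_nonneg hc0 4) (sub_nonneg.mpr hLK)
      linarith

section Parameters

variable {α γ : ℝ}

lemma lt_one_of_lt_two_sub_sqrt_two (h : α < 2 - √2) : α < 1 := by
  have : 1 < √2 := by rw [Real.lt_sqrt zero_le_one]; norm_num
  linarith

lemma two_mul_K_sub_one_eq (hα : α ≠ 2) :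
    2 * ((1 - α) * (3 - α) / (2 - α) ^ 2) - 1 = (α ^ 2 - 4 * α + 2) / (2 - α) ^ 2 := by
  have : 2 - α ≠ 0 := sub_ne_zero.mpr hα.symm
  field_simp
  ring

lemma nu_numerator_le (hα0 : 0 ≤ α) (hα1 : α ≤ 1) (hγ0 : 0 ≤ γ)
    (hγ : 2 * γ ≤ α ^ 2 - 4 * α + 2) :
    (α ^ 2 - 10 * α + 13) * γ ^ 2 ≤ 3 * (1 - α) ^ 3 * (3 - α) + (1 - α) ^ 2 * (2 - α) ^ 2 := by
  have hN : 0 ≤ α ^ 2 - 10 * α + 13 := by nlinarith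
  have hγ2 : 4 * γ ^ 2 ≤ (α ^ 2 - 4 * α + 2) ^ 2 := by nlinarith
  have hcubic : 0 ≤ 40 - 39 * α + 14 * α ^ 2 - α ^ 3 := by
    nlinarith [mul_nonneg (sq_nonneg α) (show (0 : ℝ) ≤ 14 - α by linarith)]
  have hcert : 4 * (3 * (1 - α) ^ 3 * (3 - α) + (1 - α) ^ 2 * (2 - α) ^ 2)
      - (α ^ 2 - 10 * α + 13) * (α ^ 2 - 4 * α + 2) ^ 2
      = α * (α ^ 2 - 4 * α + 2) * (40 - 39 * α + 14 * α ^ 2 - α ^ 3) + 10 * α ^ 2 := by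
    ring
  have := mul_nonneg (mul_nonneg hα0 (by linarith : 0 ≤ α ^ 2 - 4 * α + 2)) hcubic
  linarith [mul_le_mul_of_nonneg_left hγ2 hN, sq_nonneg α]

lemma nu_le_K_add_one_third (hα0 : 0 ≤ α) (hα1 : α < 1) (hγ0 : 0 ≤ γ)
    (hγ : 2 * γ ≤ α ^ 2 - 4 * α + 2) :
    (α ^ 2 - 10 * α + 13) * γ ^ 2 / (3 * (1 - α) ^ 2 * (2 - α) ^ 2)
      ≤ (1 - α) * (3 - α) / (2 - α) ^ 2 + 1 / 3 := by
  have h1 : 1 - α ≠ 0 := by linarith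
  have h2 : 2 - α ≠ 0 := by linarith
  rw [div_le_iff₀ (by positivity)]
  calc (α ^ 2 - 10 * α + 13) * γ ^ 2
      ≤ 3 * (1 - α) ^ 3 * (3 - α) + (1 - α) ^ 2 * (2 - α) ^ 2 := nu_numerator_le hα0 hα1.le hγ0 hγ
    _ = _ := by field_simp

end Parameters

theorem stmt_13 (α γ : ℝ) (h1 : 0 < α) (h2 : α < 2 - Real.sqrt 2)
    (h3 : 0 < γ) (h4 : γ ≤ (α ^ 2 - 4 * α + 2) / 2)
    (μ₁ ν₁ K : ℝ) (hμ : μ₁ = 2 * γ / (2 - α) ^ 2)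
    (hν : ν₁ = (α ^ 2 - 10 * α + 13) * γ ^ 2 / (3 * (1 - α) ^ 2 * (2 - α) ^ 2))
    (hK : K = (1 - α) * (3 - α) / (2 - α) ^ 2)
    (c₁ : ℝ) (hc0 : 0 ≤ c₁) (hc1 : c₁ ≤ 1)
    (c₂ : ℂ) (hc2 : ‖c₂‖ ≤ 1 - c₁ ^ 2) :
    c₁ * (1 - c₁ ^ 2) + (K - c₁ / (1 + c₁)) * ‖c₂‖ ^ 2 +
        μ₁ * c₁ ^ 2 * ‖c₂‖ + |1 / 3 - ν₁| * c₁ ^ 4 ≤ K := by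
  have hα1 := lt_one_of_lt_two_sub_sqrt_two h2
  have hγ : 2 * γ ≤ α ^ 2 - 4 * α + 2 := by linarith
  have hμ0 : 0 ≤ μ₁ := hμ ▸ by positivity
  have hμK : μ₁ ≤ 2 * K - 1 := by
    rw [hμ, hK, two_mul_K_sub_one_eq (by linarith)]
    gcongr
  have hν0 : 0 ≤ ν₁ := hν ▸ div_nonneg (mul_nonneg (by nlinarith) (sq_nonneg γ)) (by positivity)
  have hνK : ν₁ ≤ K + 1 / 3 := hν ▸ hK ▸ nu_le_K_add_one_third h1.le hα1 h3.le hγ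
  refine add_mul_sq_le_of_le_two_mul_sub_one hμ0 hμK ?_ hc0 hc1 (norm_nonneg c₂) hc2
  exact abs_le.mpr ⟨by linarith, by linarith⟩
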